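/- arXiv:q-bio/0311020 — 3 statements merged into one kernel-verified Lean document; each statement's English description precedes it below -/
import Mathlib

section
/- (Riemann sum lemma) Let g : ℝ^d → ℝ_{≥0} be continuous with g(x) ≤ C/(1+|x|)^{d+ε} for some constants C, ε > 0. Then for any x* ∈ ℝ^d, lim_{n→∞} n^{-d} ∑_{i∈ℤ^d} g(i/n − n x*) = ∫_{ℝ^d} g(x) dx. -/
open Filter MeasureTheory

noncomputable def vv {d : ℕ} (xstar : EuclideanSpace ℝ (Fin d)) (n : ℕ)
    (y : EuclideanSpace ℝ (Fin d)) : EuclideanSpace ℝ (Fin d) :=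
  (WithLp.equiv 2 (Fin d → ℝ)).symm
    (fun j => ((⌊(n : ℝ) * (y j + (n : ℝ) * xstar j)⌋ : ℤ) : ℝ) / n - (n : ℝ) * xstar j)

lemma vv_apply {d : ℕ} (xstar : EuclideanSpace ℝ (Fin d)) (n : ℕ)
    (y : EuclideanSpace ℝ (Fin d)) (j : Fin d) :
    vv xstar n y j = ((⌊(n : ℝ) * (y j + (n : ℝ) * xstar j)⌋ : ℤ) : ℝ) / n - (n : ℝ) * xstar j :=
  rfl

lemma vv_measurable {d : ℕ} (xstar : EuclideanSpace ℝ (Fin d)) (n : ℕ) :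
    Measurable (vv xstar n) := by
  have hpi : Measurable (fun (y : EuclideanSpace ℝ (Fin d)) =>
      (fun j => ((⌊(n : ℝ) * (y j + (n : ℝ) * xstar j)⌋ : ℤ) : ℝ) / n - (n : ℝ) * xstar j
        : Fin d → ℝ)) := by
    apply measurable_pi_lambda
    intro j
    have h0 : Measurable fun (y : EuclideanSpace ℝ (Fin d)) => y j :=
      (measurable_pi_apply j).comp (MeasurableEquiv.toLp 2 (Fin d → ℝ)).symm.measurable
    have h1 : Measurable fun (y : EuclideanSpace ℝ (Fin d)) =>
        (n : ℝ) * (y j + (n : ℝ) * xstar j) := by fun_prop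
    have h2 : Measurable fun (y : EuclideanSpace ℝ (Fin d)) =>
        ((⌊(n : ℝ) * (y j + (n : ℝ) * xstar j)⌋ : ℤ) : ℝ) :=
      measurable_from_top.comp h1.floor
    fun_prop
  have hsymm : Measurable
      ((WithLp.equiv 2 (Fin d → ℝ)).symm : (Fin d → ℝ) → EuclideanSpace ℝ (Fin d)) := by
    have := (MeasurableEquiv.toLp 2 (Fin d → ℝ)).measurable
    exact this
  exact hsymm.comp hpi

lemma vv_coord_bound {d : ℕ} (xstar : EuclideanSpace ℝ (Fin d)) {n : ℕ} (hn : 1 ≤ n)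
    (y : EuclideanSpace ℝ (Fin d)) (j : Fin d) :
    |y j - vv xstar n y j| ≤ 1 / n := by
  have hn0 : (0 : ℝ) < n := by exact_mod_cast Nat.lt_of_lt_of_le Nat.zero_lt_one hn
  set z : ℝ := (n : ℝ) * (y j + (n : ℝ) * xstar j) with hz
  have hzn : z / n = y j + (n : ℝ) * xstar j := by rw [hz]; field_simp
  have h1 : y j - vv xstar n y j = (z - (⌊z⌋ : ℝ)) / n := by
    rw [vv_apply, sub_div, hzn]; ring
  rw [h1, abs_div, abs_of_pos hn0, div_le_div_iff_of_pos_right hn0]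
  have h2 := Int.floor_le z
  have h3 := Int.lt_floor_add_one z
  rw [abs_le]; constructor <;> linarith

lemma vv_norm_bound {d : ℕ} (xstar : EuclideanSpace ℝ (Fin d)) {n : ℕ} (hn : 1 ≤ n)
    (y : EuclideanSpace ℝ (Fin d)) :
    ‖y - vv xstar n y‖ ≤ Real.sqrt d / n := by
  have hn0 : (0 : ℝ) < n := by exact_mod_cast Nat.lt_of_lt_of_le Nat.zero_lt_one hn
  rw [EuclideanSpace.norm_eq]
  have key : ∀ j, ‖(y - vv xstar n y) j‖ ^ 2 ≤ (1 / (n : ℝ)) ^ 2 := by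
    intro j
    have : (y - vv xstar n y) j = y j - vv xstar n y j := rfl
    rw [this, Real.norm_eq_abs]
    have := vv_coord_bound xstar hn y j
    nlinarith [abs_nonneg (y j - vv xstar n y j)]
  calc Real.sqrt (∑ j, ‖(y - vv xstar n y) j‖ ^ 2)
      ≤ Real.sqrt (∑ _j : Fin d, (1 / (n : ℝ)) ^ 2) :=
        Real.sqrt_le_sqrt (Finset.sum_le_sum fun j _ => key j)
    _ = Real.sqrt ((d : ℝ) * (1 / (n : ℝ)) ^ 2) := by
        rw [Finset.sum_const, Finset.card_univ, Fintype.card_fin, nsmul_eq_mul]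
    _ = Real.sqrt d * (1 / (n : ℝ)) := by
        rw [Real.sqrt_mul (by positivity), Real.sqrt_sq (by positivity)]
    _ = Real.sqrt d / n := by ring

lemma vv_tendsto {d : ℕ} (xstar : EuclideanSpace ℝ (Fin d)) (y : EuclideanSpace ℝ (Fin d)) :
    Tendsto (fun n : ℕ => vv xstar (n + 1) y) atTop (nhds y) := by
  refine tendsto_iff_dist_tendsto_zero.2 ?_
  have hb : ∀ n : ℕ, dist (vv xstar (n + 1) y) y ≤ Real.sqrt d / ((n + 1 : ℕ) : ℝ) := by
    intro n
    rw [dist_eq_norm, norm_sub_rev]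
    exact vv_norm_bound xstar (Nat.le_add_left 1 n) y
  refine squeeze_zero (fun n => dist_nonneg) hb ?_
  exact (tendsto_add_atTop_iff_nat 1).2 (tendsto_const_div_atTop_nhds_zero_nat (Real.sqrt d))

lemma vv_domination {d : ℕ} (g : EuclideanSpace ℝ (Fin d) → ℝ) (C ε : ℝ) (hε : 0 < ε)
    (hC : 0 ≤ C)
    (hbound : ∀ x, g x ≤ C / (1 + ‖x‖) ^ ((d : ℝ) + ε))
    (xstar : EuclideanSpace ℝ (Fin d)) {n : ℕ} (hn : 1 ≤ n) (y : EuclideanSpace ℝ (Fin d)) :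
    g (vv xstar n y) ≤
      (C * (1 + Real.sqrt d) ^ ((d : ℝ) + ε)) * (1 + ‖y‖) ^ (-((d : ℝ) + ε)) := by
  have hn0 : (1 : ℝ) ≤ n := by exact_mod_cast hn
  set r : ℝ := (d : ℝ) + ε with hr
  have hrpos : 0 < r := by positivity
  have h4 : ‖y - vv xstar n y‖ ≤ Real.sqrt d :=
    (vv_norm_bound xstar hn y).trans (div_le_self (Real.sqrt_nonneg _) hn0)
  have h3 := norm_sub_norm_le y (vv xstar n y)
  have h2 : 1 + ‖y‖ ≤ (1 + Real.sqrt d) * (1 + ‖vv xstar n y‖) := by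
    nlinarith [norm_nonneg (vv xstar n y), Real.sqrt_nonneg (d : ℝ)]
  calc g (vv xstar n y) ≤ C / (1 + ‖vv xstar n y‖) ^ r := hbound _
    _ ≤ (C * (1 + Real.sqrt d) ^ r) / (1 + ‖y‖) ^ r := by
        rw [div_le_div_iff₀ (by positivity) (by positivity)]
        calc C * (1 + ‖y‖) ^ r
            ≤ C * ((1 + Real.sqrt d) * (1 + ‖vv xstar n y‖)) ^ r :=
              mul_le_mul_of_nonneg_left
                (Real.rpow_le_rpow (by positivity) h2 hrpos.le) hC
          _ = C * (1 + Real.sqrt d) ^ r * (1 + ‖vv xstar n y‖) ^ r := by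
              rw [Real.mul_rpow (by positivity) (by positivity)]; ring
    _ = (C * (1 + Real.sqrt d) ^ r) * (1 + ‖y‖) ^ (-r) := by
        rw [Real.rpow_neg (by positivity), div_eq_mul_inv]

lemma sum_eq_integral {d : ℕ} (g : EuclideanSpace ℝ (Fin d) → ℝ)
    (xstar : EuclideanSpace ℝ (Fin d)) {n : ℕ} (hn : 1 ≤ n)
    (hint : Integrable (fun y => g (vv xstar n y))) :
    ((n : ℝ) ^ d)⁻¹ * ∑' i : Fin d → ℤ,
        g ((WithLp.equiv 2 (Fin d → ℝ)).symm (fun j => (i j : ℝ) / n) - (n : ℝ) • xstar)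
      = ∫ y, g (vv xstar n y) := by
  have hn0 : (0 : ℝ) < n := by exact_mod_cast Nat.lt_of_lt_of_le Nat.zero_lt_one hn
  set B : (Fin d → ℤ) → Set (EuclideanSpace ℝ (Fin d)) := fun i =>
    {y | ∀ j, ⌊(n : ℝ) * (y j + (n : ℝ) * xstar j)⌋ = i j} with hB
  have hBmeas : ∀ i, MeasurableSet (B i) := by
    intro i
    have hT : Measurable (fun (y : EuclideanSpace ℝ (Fin d)) =>
        (fun j => ⌊(n : ℝ) * (y j + (n : ℝ) * xstar j)⌋ : Fin d → ℤ)) := by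
      apply measurable_pi_lambda
      intro j
      have h0 : Measurable fun (y : EuclideanSpace ℝ (Fin d)) => y j :=
        (measurable_pi_apply j).comp (MeasurableEquiv.toLp 2 (Fin d → ℝ)).symm.measurable
      have h1 : Measurable fun (y : EuclideanSpace ℝ (Fin d)) =>
          (n : ℝ) * (y j + (n : ℝ) * xstar j) := by fun_prop
      exact h1.floor
    have : B i = (fun (y : EuclideanSpace ℝ (Fin d)) =>
        (fun j => ⌊(n : ℝ) * (y j + (n : ℝ) * xstar j)⌋ : Fin d → ℤ)) ⁻¹' {i} := by
      ext y
      simp [hB, Set.mem_preimage, Set.mem_singleton_iff, funext_iff]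
    rw [this]
    exact hT (measurableSet_singleton i)
  have hBdisj : Pairwise (Function.onFun Disjoint B) := by
    intro i i' hne
    rw [Function.onFun, Set.disjoint_left]
    intro y hy hy'
    exact hne (funext fun j => (hy j).symm.trans (hy' j))
  have hBunion : (⋃ i, B i) = Set.univ := by
    rw [Set.eq_univ_iff_forall]
    intro y
    exact Set.mem_iUnion.2 ⟨fun j => ⌊(n : ℝ) * (y j + (n : ℝ) * xstar j)⌋, fun j => rfl⟩
  have hvol : ∀ i, volume (B i) = ENNReal.ofReal (1 / (n : ℝ)) ^ d := by
    intro i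
    have hset : B i = (MeasurableEquiv.toLp 2 (Fin d → ℝ)).symm ⁻¹'
        (Set.univ.pi fun j => Set.Ico ((i j : ℝ) / n - n * xstar j)
          (((i j : ℝ) + 1) / n - n * xstar j)) := by
      ext y
      simp only [hB, Set.mem_preimage, Set.mem_pi, Set.mem_univ, true_implies, Set.mem_Ico,
        MeasurableEquiv.coe_toLp_symm, Set.mem_setOf_eq]
      refine forall_congr' fun j => ?_
      rw [Int.floor_eq_iff]
      constructor
      · rintro ⟨h1, h2⟩
        constructor
        · rw [sub_le_iff_le_add, div_le_iff₀ hn0]; nlinarith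
        · rw [lt_sub_iff_add_lt, lt_div_iff₀ hn0]; nlinarith
      · rintro ⟨h1, h2⟩
        rw [sub_le_iff_le_add, div_le_iff₀ hn0] at h1
        rw [lt_sub_iff_add_lt, lt_div_iff₀ hn0] at h2
        constructor <;> nlinarith
    rw [hset, (EuclideanSpace.volume_preserving_symm_measurableEquiv_toLp (Fin d)).measure_preimage
        ((MeasurableSet.univ_pi fun j => measurableSet_Ico).nullMeasurableSet),
      volume_pi_pi]
    have hIco : ∀ j : Fin d, volume (Set.Ico ((i j : ℝ) / n - n * xstar j)
        (((i j : ℝ) + 1) / n - n * xstar j)) = ENNReal.ofReal (1 / (n : ℝ)) := by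
      intro j
      rw [Real.volume_Ico]
      congr 1
      field_simp; ring
    rw [Finset.prod_congr rfl (fun j _ => hIco j), Finset.prod_const, Finset.card_univ,
      Fintype.card_fin]
  have hval : ∀ i : Fin d → ℤ, ∀ y ∈ B i,
      g (vv xstar n y) =
        g ((WithLp.equiv 2 (Fin d → ℝ)).symm (fun j => (i j : ℝ) / n) - (n : ℝ) • xstar) := by
    intro i y hy
    congr 1
    ext j
    have := hy j
    simp only [vv_apply, this, PiLp.sub_apply, PiLp.smul_apply, smul_eq_mul,
      WithLp.equiv_symm_apply, PiLp.toLp_apply]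
  rw [← tsum_mul_left]
  rw [← setIntegral_univ, ← hBunion,
    integral_iUnion hBmeas hBdisj (by rw [hBunion]; exact hint.integrableOn)]
  refine tsum_congr fun i => ?_
  rw [setIntegral_congr_fun (hBmeas i) (hval i), setIntegral_const, Measure.real, hvol i, ENNReal.toReal_pow,
    ENNReal.toReal_ofReal (by positivity), smul_eq_mul, one_div, inv_pow]

theorem stmt10 {d : ℕ} (g : EuclideanSpace ℝ (Fin d) → ℝ) (C ε : ℝ) (hε : 0 < ε)
    (hg0 : ∀ x, 0 ≤ g x) (hgc : Continuous g)
    (hgint : Integrable g)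
    (hbound : ∀ x, g x ≤ C / (1 + ‖x‖) ^ ((d : ℝ) + ε))
    (xstar : EuclideanSpace ℝ (Fin d)) :
    Tendsto (fun n : ℕ =>
        ((n : ℝ) ^ d)⁻¹ * ∑' i : Fin d → ℤ,
          g ((WithLp.equiv 2 (Fin d → ℝ)).symm (fun j => (i j : ℝ) / n) - (n : ℝ) • xstar))
      atTop (nhds (∫ x, g x)) := by
  have hC : 0 ≤ C := by
    have := hbound 0
    simp only [norm_zero, add_zero, Real.one_rpow, div_one] at this
    linarith [hg0 0]
  set r : ℝ := (d : ℝ) + ε with hr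
  set D : EuclideanSpace ℝ (Fin d) → ℝ :=
    fun y => (C * (1 + Real.sqrt d) ^ r) * (1 + ‖y‖) ^ (-r) with hD
  have hDint : Integrable D := by
    have hfin : ((Module.finrank ℝ (EuclideanSpace ℝ (Fin d)) : ℝ)) < r := by
      rw [finrank_euclideanSpace_fin, hr]; linarith
    exact (integrable_one_add_norm hfin).const_mul _
  have hmeas : ∀ n : ℕ, AEStronglyMeasurable (fun y => g (vv xstar n y)) volume :=
    fun n => (hgc.measurable.comp (vv_measurable xstar n)).aestronglyMeasurable
  have hbd : ∀ n : ℕ, 1 ≤ n → ∀ y, ‖g (vv xstar n y)‖ ≤ D y := by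
    intro n hn y
    rw [Real.norm_of_nonneg (hg0 _)]
    exact vv_domination g C ε hε hC hbound xstar hn y
  have hint : ∀ n : ℕ, 1 ≤ n → Integrable (fun y => g (vv xstar n y)) :=
    fun n hn => hDint.mono' (hmeas n) (ae_of_all _ (hbd n hn))
  refine (tendsto_add_atTop_iff_nat 1).1 ?_
  have hDCT : Tendsto (fun n : ℕ => ∫ y, g (vv xstar (n + 1) y)) atTop (nhds (∫ x, g x)) := by
    refine tendsto_integral_of_dominated_convergence D (fun n => hmeas (n + 1)) hDint
      (fun n => ae_of_all _ (hbd (n + 1) (Nat.le_add_left 1 n))) ?_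
    refine ae_of_all _ fun y => ?_
    exact (hgc.tendsto y).comp (vv_tendsto xstar y)
  exact hDCT.congr fun n =>
    (sum_eq_integral g xstar (Nat.le_add_left 1 n) (hint (n + 1) (Nat.le_add_left 1 n))).symm
end

section
/- For any nonnegative integer k, any α > 0, and any x* ∈ ℝ^d, lim_{N→∞} N^{(k−d)/2} ∑_{i∈ℤ^d} |i/N − x*|^k e^{−αN|i/N − x*|²} = ∫_{ℝ^d} |x|^k e^{−α|x|²} dx. -/
open Filter MeasureTheory Real

lemma riemann_est {d : ℕ} (f H : (Fin d → ℝ) → ℝ)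
    (hfc : Continuous f) (hf0 : ∀ x, 0 ≤ f x)
    (hHc : Continuous H) (hHi : Integrable H)
    (hfH : ∀ x u : Fin d → ℝ, dist x u ≤ 1 → f u ≤ H x)
    {ε : ℝ} (hε : 0 < ε) (hε1 : ε ≤ 1) (t : Fin d → ℝ)
    {δ : ℝ} (hfu : ∀ u v : Fin d → ℝ, dist u v ≤ ε → |f u - f v| ≤ δ) :
    |ε ^ d * (∑' i : Fin d → ℤ, f (fun j => ε * i j + t j)) - ∫ x, f x|
      ≤ ∫ x, min δ (2 * H x) := by
  classical
  set c : (Fin d → ℤ) → (Fin d → ℝ) := fun i j => ε * i j + t j with hc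
  set Q : (Fin d → ℤ) → Set (Fin d → ℝ) :=
    fun i => Set.univ.pi fun j => Set.Ico (c i j) (c i j + ε) with hQ
  have hQm : ∀ i, MeasurableSet (Q i) := fun i =>
    MeasurableSet.univ_pi fun j => measurableSet_Ico
  have hQd : Pairwise (Function.onFun Disjoint Q) := by
    intro a b hab
    obtain ⟨j, hj⟩ := Function.ne_iff.mp hab
    rw [Function.onFun, Set.disjoint_left]
    intro x hxa hxb
    have ha := hxa j (Set.mem_univ j)
    have hb := hxb j (Set.mem_univ j)
    rcases lt_or_gt_of_ne hj with h | h
    · have : c a j + ε ≤ c b j := by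
        have : (a j : ℝ) + 1 ≤ b j := by exact_mod_cast h
        simp only [hc]
        nlinarith
      exact absurd (ha.2.trans_le this) (not_lt.mpr hb.1)
    · have : c b j + ε ≤ c a j := by
        have : (b j : ℝ) + 1 ≤ a j := by exact_mod_cast h
        simp only [hc]
        nlinarith
      exact absurd (hb.2.trans_le this) (not_lt.mpr ha.1)
  have hQu : (⋃ i, Q i) = Set.univ := by
    ext x
    simp only [Set.mem_iUnion, Set.mem_univ, iff_true]
    refine ⟨fun j => ⌊(x j - t j) / ε⌋, ?_⟩
    intro j _
    constructor
    · have := Int.floor_le ((x j - t j) / ε)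
      have h2 : ε * ⌊(x j - t j) / ε⌋ ≤ x j - t j := by
        rw [mul_comm]
        exact (le_div_iff₀ hε).mp this |>.trans_eq rfl
      simp only [hc]; linarith
    · have := Int.lt_floor_add_one ((x j - t j) / ε)
      have h2 : x j - t j < ε * (⌊(x j - t j) / ε⌋ + 1) := by
        rw [mul_comm]
        exact (div_lt_iff₀ hε).mp this
      simp only [hc]; nlinarith
  have hQv : ∀ i, volume (Q i) = ENNReal.ofReal (ε ^ d) := by
    intro i
    rw [hQ]
    rw [volume_pi_pi]
    simp only [Real.volume_Ico, add_sub_cancel_left]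
    rw [Finset.prod_const, ← ENNReal.ofReal_pow hε.le]
    simp
  have hvr : ∀ i, (volume (Q i)).toReal = ε ^ d := by
    intro i; rw [hQv i, ENNReal.toReal_ofReal (by positivity)]
  have hdist : ∀ i, ∀ x ∈ Q i, dist x (c i) ≤ ε := by
    intro i x hx
    refine dist_pi_le_iff hε.le |>.mpr fun j => ?_
    have := hx j (Set.mem_univ j)
    rw [Real.dist_eq, abs_le]
    constructor <;> [linarith [this.1]; linarith [this.2]]
  have hH0 : ∀ x, 0 ≤ H x := fun x =>
    (hf0 x).trans (hfH x x (by simp))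
  have hfi : Integrable f := by
    refine hHi.mono' hfc.aestronglyMeasurable (ae_of_all _ fun x => ?_)
    rw [Real.norm_eq_abs, abs_of_nonneg (hf0 x)]
    exact hfH x x (by simp)
  have hδ0 : 0 ≤ δ := by simpa using hfu 0 0 (by simp [hε.le])
  set m : (Fin d → ℝ) → ℝ := fun x => min δ (2 * H x) with hm
  have hm0 : ∀ x, 0 ≤ m x := fun x => le_min hδ0 (by linarith [hH0 x])
  have hmc : Continuous m := continuous_const.min (continuous_const.mul hHc)
  have hmi : Integrable m := by
    refine (hHi.const_mul 2).mono' hmc.aestronglyMeasurable (ae_of_all _ fun x => ?_)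
    rw [Real.norm_eq_abs, abs_of_nonneg (hm0 x)]
    exact min_le_right _ _
  -- per-box constant integral
  have hconst : ∀ i (r : ℝ), ∫ _ in Q i, r = ε ^ d * r := by
    intro i r
    rw [setIntegral_const, measureReal_def, hvr i, smul_eq_mul]
  have key1 : ∀ i, ε ^ d * f (c i) ≤ ∫ x in Q i, H x := by
    intro i
    rw [← hconst i (f (c i))]
    refine setIntegral_mono_on ((integrableOn_const_iff).mpr (Or.inr ?_))
      hHi.integrableOn (hQm i) fun x hx => ?_
    · rw [hQv i]; exact ENNReal.ofReal_lt_top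
    · exact hfH x (c i) ((hdist i x hx).trans hε1)
  have hsumH : HasSum (fun i => ∫ x in Q i, H x) (∫ x, H x) := by
    have := hasSum_integral_iUnion (μ := volume) (f := H) hQm hQd
      (hQu ▸ hHi.integrableOn)
    rwa [hQu, setIntegral_univ] at this
  have hsumf : HasSum (fun i => ∫ x in Q i, f x) (∫ x, f x) := by
    have := hasSum_integral_iUnion (μ := volume) (f := f) hQm hQd
      (hQu ▸ hfi.integrableOn)
    rwa [hQu, setIntegral_univ] at this
  have hsumm : HasSum (fun i => ∫ x in Q i, m x) (∫ x, m x) := by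
    have := hasSum_integral_iUnion (μ := volume) (f := m) hQm hQd
      (hQu ▸ hmi.integrableOn)
    rwa [hQu, setIntegral_univ] at this
  have hS : Summable (fun i => ε ^ d * f (c i)) :=
    Summable.of_nonneg_of_le (fun i => mul_nonneg (by positivity) (hf0 _)) key1 hsumH.summable
  set A : (Fin d → ℤ) → ℝ := fun i => ε ^ d * f (c i) - ∫ x in Q i, f x with hA
  have key2 : ∀ i, |A i| ≤ ∫ x in Q i, m x := by
    intro i
    have hQfin : volume (Q i) < ⊤ := by rw [hQv i]; exact ENNReal.ofReal_lt_top
    have hci : IntegrableOn (fun _ => f (c i)) (Q i) :=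
      (integrableOn_const_iff).mpr (Or.inr hQfin)
    have : A i = ∫ x in Q i, (f (c i) - f x) := by
      rw [integral_sub hci hfi.integrableOn, hconst i (f (c i)), hA]
    rw [this]
    calc |∫ x in Q i, (f (c i) - f x)| ≤ ∫ x in Q i, |f (c i) - f x| := by
          simpa [Real.norm_eq_abs] using
            norm_integral_le_integral_norm (fun x => f (c i) - f x) (μ := volume.restrict (Q i))
      _ ≤ ∫ x in Q i, m x := by
          refine setIntegral_mono_on ((hci.sub hfi.integrableOn).abs)
            hmi.integrableOn (hQm i) fun x hx => ?_
          refine le_min ?_ ?_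
          · exact hfu (c i) x (by rw [dist_comm]; exact hdist i x hx)
          · have h1 : f (c i) ≤ H x :=
              hfH x (c i) ((hdist i x hx).trans hε1)
            have h2 : f x ≤ H x := hfH x x (by simp)
            exact abs_sub_le_iff.mpr
              ⟨by linarith [hf0 x, hH0 x], by linarith [hf0 (c i), hH0 x]⟩
  have hSA : Summable A := hS.sub hsumf.summable
  have hSabs : Summable (fun i => |A i|) :=
    Summable.of_nonneg_of_le (fun i => abs_nonneg _) key2 hsumm.summable
  have step1 : ε ^ d * (∑' i, f (c i)) - ∫ x, f x = ∑' i, A i := by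
    rw [← tsum_mul_left, ← hsumf.tsum_eq, ← Summable.tsum_sub hS hsumf.summable]
  rw [step1]
  have habs : Summable (fun i => ‖A i‖) := by simpa only [Real.norm_eq_abs] using hSabs
  calc |∑' i, A i| ≤ ∑' i, |A i| := by
        have := norm_tsum_le_tsum_norm habs
        simpa only [Real.norm_eq_abs] using this
    _ ≤ ∑' i, ∫ x in Q i, m x := Summable.tsum_le_tsum key2 hSabs hsumm.summable
    _ = ∫ x, m x := hsumm.tsum_eq


lemma pow_mul_exp_le' (k : ℕ) {a : ℝ} (ha : 0 < a) {r : ℝ} (hr : 0 ≤ r) :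
    r ^ k * Real.exp (-(a * r ^ 2)) ≤ 1 + k.factorial * a⁻¹ ^ k := by
  have hfac : (0:ℝ) < k.factorial := by exact_mod_cast k.factorial_pos
  have h1 : (a * r ^ 2) ^ k / k.factorial ≤ Real.exp (a * r ^ 2) := by
    refine le_trans ?_ (Real.sum_le_exp_of_nonneg (by positivity) (k + 1))
    exact Finset.single_le_sum (f := fun i => (a * r ^ 2) ^ i / i.factorial)
      (fun i _ => by positivity) (Finset.self_mem_range_succ k)
  have hexp : (0:ℝ) < Real.exp (a * r ^ 2) := Real.exp_pos _
  have hkey : (r ^ 2) ^ k * Real.exp (-(a * r ^ 2)) ≤ k.factorial * a⁻¹ ^ k := by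
    rw [Real.exp_neg]
    rw [mul_pow] at h1
    have hak : (0:ℝ) < a ^ k := by positivity
    rw [div_le_iff₀ hfac] at h1
    calc (r ^ 2) ^ k * (Real.exp (a * r ^ 2))⁻¹
        ≤ (Real.exp (a * r ^ 2) * k.factorial / a ^ k) * (Real.exp (a * r ^ 2))⁻¹ := by
          apply mul_le_mul_of_nonneg_right _ (by positivity)
          rw [le_div_iff₀ hak]; nlinarith
      _ = k.factorial * (a ^ k)⁻¹ := by field_simp
      _ = k.factorial * a⁻¹ ^ k := by rw [inv_pow]
  have hexp1 : Real.exp (-(a * r ^ 2)) ≤ 1 := by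
    rw [Real.exp_le_one_iff]; nlinarith [sq_nonneg r]
  rcases le_total r 1 with h | h
  · have : r ^ k ≤ 1 := pow_le_one₀ hr h
    nlinarith [Real.exp_pos (-(a * r ^ 2)), mul_nonneg (pow_nonneg hr k) (Real.exp_pos (-(a * r ^ 2))).le,
      mul_nonneg (Nat.cast_nonneg k.factorial) (pow_nonneg (inv_nonneg.mpr ha.le) k)]
  · have h2 : r ^ k ≤ (r ^ 2) ^ k := by
      rw [← pow_mul]
      exact pow_le_pow_right₀ h (by omega)
    have : r ^ k * Real.exp (-(a * r ^ 2)) ≤ (r ^ 2) ^ k * Real.exp (-(a * r ^ 2)) :=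
      mul_le_mul_of_nonneg_right h2 (Real.exp_pos _).le
    linarith

noncomputable def eL {d : ℕ} (w : Fin d → ℝ) : EuclideanSpace ℝ (Fin d) :=
  (WithLp.equiv 2 (Fin d → ℝ)).symm w

section norms1
variable {d : ℕ}

lemma norm_eL_sq (w : Fin d → ℝ) : ‖eL w‖ ^ 2 = ∑ j, w j ^ 2 := by
  rw [EuclideanSpace.norm_eq]
  rw [Real.sq_sqrt (by positivity)]
  simp [eL, PiLp.toLp_apply]

lemma pi_norm_le_eL (w : Fin d → ℝ) : ‖w‖ ≤ ‖eL w‖ := by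
  refine pi_norm_le_iff_of_nonneg (norm_nonneg _) |>.mpr fun j => ?_
  have h1 : w j ^ 2 ≤ ∑ i, w i ^ 2 :=
    Finset.single_le_sum (f := fun i => w i ^ 2) (fun i _ => sq_nonneg _) (Finset.mem_univ j)
  have := Real.sqrt_le_sqrt h1
  rw [Real.sqrt_sq_eq_abs] at this
  rw [Real.norm_eq_abs]
  calc |w j| ≤ Real.sqrt (∑ i, w i ^ 2) := this
    _ = ‖eL w‖ := by rw [← norm_eL_sq, Real.sqrt_sq (norm_nonneg _)]

lemma eL_norm_le (w : Fin d → ℝ) : ‖eL w‖ ≤ Real.sqrt d * ‖w‖ := by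
  have h1 : ‖eL w‖ ^ 2 ≤ d * ‖w‖ ^ 2 := by
    rw [norm_eL_sq]
    calc ∑ j, w j ^ 2 ≤ ∑ _j : Fin d, ‖w‖ ^ 2 := by
          refine Finset.sum_le_sum fun j _ => ?_
          have h := norm_le_pi_norm w j
          rw [Real.norm_eq_abs] at h
          nlinarith [abs_nonneg (w j), sq_abs (w j)]
      _ = d * ‖w‖ ^ 2 := by simp [mul_comm]
  have h2 := Real.sqrt_le_sqrt h1
  rw [Real.sqrt_sq (norm_nonneg _)] at h2
  calc ‖eL w‖ ≤ Real.sqrt (↑d * ‖w‖ ^ 2) := h2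
    _ = Real.sqrt d * ‖w‖ := by
        rw [Real.sqrt_mul (Nat.cast_nonneg d), Real.sqrt_sq (norm_nonneg _)]

lemma eL_sub (x u : Fin d → ℝ) : eL x - eL u = eL (x - u) := rfl

lemma eL_sq_lower (x u : Fin d → ℝ) (h : dist x u ≤ 1) :
    ‖eL x‖ ^ 2 / 2 - d ≤ ‖eL u‖ ^ 2 := by
  have h1 : ‖eL x‖ ≤ ‖eL u‖ + Real.sqrt d := by
    calc ‖eL x‖ ≤ ‖eL u‖ + ‖eL x - eL u‖ := by
          simpa using norm_add_le (eL u) (eL x - eL u)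
      _ ≤ ‖eL u‖ + Real.sqrt d := by
          rw [eL_sub]
          have := eL_norm_le (x - u)
          have hd : ‖x - u‖ ≤ 1 := by rwa [← dist_eq_norm]
          have hs : (0:ℝ) ≤ Real.sqrt d := Real.sqrt_nonneg d
          nlinarith [eL_norm_le (x - u)]
  have hsq : Real.sqrt d ^ 2 = d := Real.sq_sqrt (Nat.cast_nonneg d)
  nlinarith [norm_nonneg (eL x), norm_nonneg (eL u), Real.sqrt_nonneg (d:ℝ),
    sq_nonneg (‖eL u‖ - Real.sqrt d)]

end norms1

section gauss
variable {d k : ℕ} {α : ℝ}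

noncomputable def fG (d k : ℕ) (α : ℝ) : (Fin d → ℝ) → ℝ :=
  fun w => ‖eL w‖ ^ k * Real.exp (-α * ‖eL w‖ ^ 2)

noncomputable def MG (k : ℕ) (α : ℝ) : ℝ := 1 + k.factorial * (α / 2)⁻¹ ^ k

noncomputable def HG (d k : ℕ) (α : ℝ) : (Fin d → ℝ) → ℝ :=
  fun w => MG k α * Real.exp (α * d / 2) * Real.exp (-(α / 4) * ‖eL w‖ ^ 2)

lemma MG_pos (hα : 0 < α) : 0 < MG k α := by
  have : (0:ℝ) ≤ k.factorial * (α / 2)⁻¹ ^ k := by positivity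
  simp only [MG]; linarith

lemma fG_nonneg (w : Fin d → ℝ) : 0 ≤ fG d k α w := by
  unfold fG; positivity

lemma eL_continuous : Continuous (eL (d := d)) := PiLp.continuous_toLp 2 _

lemma fG_continuous : Continuous (fG d k α) := by
  unfold fG
  exact ((eL_continuous.norm).pow k).mul
    ((continuous_const.mul ((eL_continuous.norm).pow 2)) : Continuous fun w => -α * ‖eL w‖ ^ 2).rexp

lemma HG_continuous : Continuous (HG d k α) := by
  unfold HG
  exact continuous_const.mul (((continuous_const.mul ((eL_continuous.norm).pow 2)) : Continuous fun w => -(α/4) * ‖eL w‖ ^ 2).rexp)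

lemma fG_le_bound (hα : 0 < α) (u : Fin d → ℝ) :
    fG d k α u ≤ MG k α * Real.exp (-(α / 2) * ‖eL u‖ ^ 2) := by
  have h2 : 0 < α / 2 := by linarith
  have hb := pow_mul_exp_le' k h2 (norm_nonneg (eL u))
  have hsplit : -α * ‖eL u‖ ^ 2 = -(α / 2 * ‖eL u‖ ^ 2) + -(α / 2) * ‖eL u‖ ^ 2 := by ring
  unfold fG MG
  rw [hsplit, Real.exp_add, ← mul_assoc]
  exact mul_le_mul_of_nonneg_right hb (Real.exp_pos _).le

lemma fG_le_HG (hα : 0 < α) (x u : Fin d → ℝ) (h : dist x u ≤ 1) :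
    fG d k α u ≤ HG d k α x := by
  refine (fG_le_bound hα u).trans ?_
  unfold HG
  rw [mul_assoc, ← Real.exp_add]
  refine mul_le_mul_of_nonneg_left ?_ (MG_pos hα).le
  refine Real.exp_le_exp.mpr ?_
  have := eL_sq_lower x u h
  nlinarith

lemma gauss_pi_integrable (hβ : 0 < α) :
    Integrable (fun w : Fin d → ℝ => Real.exp (-α * ‖eL w‖ ^ 2)) := by
  have hb : (0:ℝ) < (α : ℂ).re := by simpa using hβ
  have hc := GaussianFourier.integrable_cexp_neg_mul_sum_add (b := (α : ℂ)) hb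
    (fun _ : Fin d => (0 : ℂ))
  have hn := hc.norm
  refine hn.congr (ae_of_all _ fun w => ?_)
  have : ∀ w : Fin d → ℝ, (- (α:ℂ) * ∑ i, (w i : ℂ) ^ 2 + ∑ i, 0 * (w i : ℂ)).re
      = -α * ∑ i, w i ^ 2 := by
    intro w
    simp only [Finset.sum_const_zero, zero_mul, add_zero, Complex.mul_re, Complex.neg_re,
      Complex.ofReal_re, Complex.neg_im, Complex.ofReal_im, neg_zero, zero_mul, sub_zero]
    norm_num
    exact Or.inl (by norm_cast)
  simp only
  rw [Complex.norm_exp, this w, norm_eL_sq]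

lemma HG_integrable (hα : 0 < α) : Integrable (HG d k α) := by
  have h4 : 0 < α / 4 := by linarith
  have := (gauss_pi_integrable (d := d) h4).const_mul (MG k α * Real.exp (α * d / 2))
  refine this.congr (ae_of_all _ fun w => ?_)
  unfold HG
  rw [mul_assoc]
  ring_nf

set_option maxHeartbeats 1000000 in
lemma fG_uniformContinuous (hα : 0 < α) : UniformContinuous (fG d k α) := by
  refine fG_continuous.uniformContinuous_of_tendsto_cocompact (x := 0) ?_
  have htn : Tendsto (fun u : Fin d → ℝ => ‖eL u‖) (Filter.cocompact _) atTop :=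
    tendsto_atTop_mono pi_norm_le_eL tendsto_norm_cocompact_atTop
  have hsq : Tendsto (fun r : ℝ => α / 2 * r ^ 2) atTop atTop := by
    refine Tendsto.const_mul_atTop (by linarith) ?_
    exact tendsto_pow_atTop (by norm_num : 2 ≠ 0)
  have hexp : Tendsto (fun r : ℝ => MG k α * Real.exp (-(α / 2) * r ^ 2)) atTop (nhds 0) := by
    have h1 : Tendsto (fun r : ℝ => Real.exp (-(α / 2 * r ^ 2))) atTop (nhds 0) :=
      Real.tendsto_exp_neg_atTop_nhds_zero.comp hsq
    have h2 := h1.const_mul (MG k α)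
    rw [mul_zero] at h2
    refine h2.congr fun r => ?_
    ring_nf
  have hcomp : Tendsto (fun u : Fin d → ℝ => MG k α * Real.exp (-(α / 2) * ‖eL u‖ ^ 2))
      (Filter.cocompact _) (nhds 0) := hexp.comp htn
  refine squeeze_zero_norm (fun u => ?_) hcomp
  rw [Real.norm_eq_abs, abs_of_nonneg (fG_nonneg u)]
  exact fG_le_bound hα u

lemma integral_transfer :
    (∫ x : EuclideanSpace ℝ (Fin d), ‖x‖ ^ k * Real.exp (-α * ‖x‖ ^ 2))
      = ∫ w : Fin d → ℝ, fG d k α w := by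
  have hmp := (EuclideanSpace.volume_preserving_symm_measurableEquiv_toLp (Fin d)).symm
  rw [← hmp.integral_comp (MeasurableEquiv.measurableEmbedding _)
    (fun x => ‖x‖ ^ k * Real.exp (-α * ‖x‖ ^ 2))]
  rfl

lemma min_integral_tendsto (hα : 0 < α) :
    Tendsto (fun n : ℕ => ∫ x : Fin d → ℝ, min ((n : ℝ) + 1)⁻¹ (2 * HG d k α x))
      atTop (nhds 0) := by
  have hH0 : ∀ x : Fin d → ℝ, 0 ≤ HG d k α x := fun x =>
    (fG_nonneg x).trans (fG_le_HG hα x x (by simp))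
  have h := tendsto_integral_of_dominated_convergence
    (F := fun (n : ℕ) (x : Fin d → ℝ) => min ((n : ℝ) + 1)⁻¹ (2 * HG d k α x))
    (f := fun _ => (0:ℝ)) (bound := fun x => 2 * HG d k α x)
    (fun n => (continuous_const.min (continuous_const.mul HG_continuous)).aestronglyMeasurable)
    ((HG_integrable hα).const_mul 2)
    (fun n => ae_of_all _ fun x => by
      rw [Real.norm_eq_abs, abs_of_nonneg (le_min (by positivity) (by linarith [hH0 x]))]
      exact min_le_right _ _)
    (ae_of_all _ fun x => by
      have h1 : Tendsto (fun n : ℕ => ((n : ℝ) + 1)⁻¹) atTop (nhds 0) := by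
        simpa [one_div] using tendsto_one_div_add_atTop_nhds_zero_nat (𝕜 := ℝ)
      refine squeeze_zero (fun n => le_min (by positivity) (by linarith [hH0 x])) 
        (fun n => min_le_left _ _) h1)
  simpa using h

lemma scalar_id (k d : ℕ) {N : ℕ} (hN : 1 ≤ N) :
    (N : ℝ) ^ (((k : ℝ) - d) / 2) = ((Real.sqrt N)⁻¹) ^ d * (Real.sqrt N) ^ k := by
  have hN0 : (0:ℝ) < N := by exact_mod_cast hN
  have h1 : (Real.sqrt N) ^ k = (N : ℝ) ^ ((k : ℝ) / 2) := by
    rw [← Real.rpow_natCast (Real.sqrt N) k, Real.sqrt_eq_rpow, ← Real.rpow_mul hN0.le]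
    congr 1
    ring
  have h2 : ((Real.sqrt N)⁻¹) ^ d = (N : ℝ) ^ (-(d : ℝ) / 2) := by
    rw [← Real.rpow_natCast ((Real.sqrt N)⁻¹) d, ← Real.rpow_neg_one (Real.sqrt N),
      Real.sqrt_eq_rpow, ← Real.rpow_mul hN0.le, ← Real.rpow_mul hN0.le]
    congr 1
    ring
  rw [h1, h2, ← Real.rpow_add hN0]
  congr 1
  ring

lemma sum_rewrite {d : ℕ} (k : ℕ) (α : ℝ) (xstar : EuclideanSpace ℝ (Fin d)) {N : ℕ}
    (hN : 1 ≤ N) :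
    (N : ℝ) ^ (((k : ℝ) - d) / 2) * ∑' i : Fin d → ℤ,
          ‖(WithLp.equiv 2 (Fin d → ℝ)).symm (fun j => (i j : ℝ) / N) - xstar‖ ^ k *
            Real.exp (-α * N *
              ‖(WithLp.equiv 2 (Fin d → ℝ)).symm (fun j => (i j : ℝ) / N) - xstar‖ ^ 2)
    = ((Real.sqrt N)⁻¹) ^ d * ∑' i : Fin d → ℤ,
        fG d k α (fun j => (Real.sqrt N)⁻¹ * (i j : ℝ) + -(Real.sqrt N * xstar j)) := by
  have hN0 : (0:ℝ) < N := by exact_mod_cast hN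
  rw [← tsum_mul_left, ← tsum_mul_left]
  refine tsum_congr fun i => ?_
  set s := Real.sqrt N with hs
  have hs0 : 0 < s := Real.sqrt_pos.mpr hN0
  have hss : s * s = N := Real.mul_self_sqrt hN0.le
  set v : EuclideanSpace ℝ (Fin d) :=
    (WithLp.equiv 2 (Fin d → ℝ)).symm (fun j => (i j : ℝ) / N) - xstar with hv
  have heL : eL (fun j => s⁻¹ * (i j : ℝ) + -(s * xstar j)) = s • v := by
    ext j
    simp only [eL, WithLp.equiv_symm_apply, PiLp.toLp_apply, hv, PiLp.smul_apply, PiLp.sub_apply,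
      smul_eq_mul]
    rw [mul_sub]
    have : s * ((i j : ℝ) / N) = s⁻¹ * (i j : ℝ) := by
      rw [← hss]
      field_simp
    rw [this]
    ring
  have hnv : ‖eL (fun j => s⁻¹ * (i j : ℝ) + -(s * xstar j))‖ = s * ‖v‖ := by
    rw [heL, norm_smul, Real.norm_eq_abs, abs_of_nonneg hs0.le]
  unfold fG
  rw [hnv]
  rw [mul_pow s ‖v‖ k, mul_pow s ‖v‖ 2]
  have hss2 : s ^ 2 = (N : ℝ) := by rw [sq]; exact hss
  rw [hss2]
  rw [scalar_id k d hN]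
  rw [← hs]
  ring_nf

theorem stmt11 {d : ℕ} (k : ℕ) (α : ℝ) (hα : 0 < α)
    (xstar : EuclideanSpace ℝ (Fin d)) :
    Tendsto (fun N : ℕ =>
        (N : ℝ) ^ (((k : ℝ) - d) / 2) * ∑' i : Fin d → ℤ,
          ‖(WithLp.equiv 2 (Fin d → ℝ)).symm (fun j => (i j : ℝ) / N) - xstar‖ ^ k *
            Real.exp (-α * N *
              ‖(WithLp.equiv 2 (Fin d → ℝ)).symm (fun j => (i j : ℝ) / N) - xstar‖ ^ 2))
      atTop
      (nhds (∫ x : EuclideanSpace ℝ (Fin d), ‖x‖ ^ k * Real.exp (-α * ‖x‖ ^ 2))) := by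
  rw [integral_transfer (d := d) (k := k) (α := α)]
  rw [Metric.tendsto_atTop]
  intro δ hδ
  obtain ⟨n, hn⟩ :=
    ((min_integral_tendsto (d := d) (k := k) hα).eventually (gt_mem_nhds hδ)).exists
  have hδ'0 : 0 < ((n : ℝ) + 1)⁻¹ := by positivity
  obtain ⟨η, hη0, hη⟩ := Metric.uniformContinuous_iff.mp
    (fG_uniformContinuous (d := d) (k := k) hα) _ hδ'0
  have hev : ∀ᶠ N : ℕ in atTop, 1 ≤ N ∧ (Real.sqrt N)⁻¹ < η := by
    have h1 : Tendsto (fun N : ℕ => (Real.sqrt (N : ℝ))⁻¹) atTop (nhds 0) := by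
      apply Tendsto.inv_tendsto_atTop
      have hsq : Tendsto Real.sqrt atTop atTop :=
        (tendsto_rpow_atTop (by norm_num : (0:ℝ) < 1/2)).congr
          (fun x => (Real.sqrt_eq_rpow x).symm)
      exact hsq.comp tendsto_natCast_atTop_atTop
    exact (Filter.eventually_ge_atTop 1).and (h1.eventually (gt_mem_nhds hη0))
  obtain ⟨N₀, hN₀⟩ := Filter.eventually_atTop.mp hev
  refine ⟨N₀, fun N hN => ?_⟩
  obtain ⟨hN1, hNη⟩ := hN₀ N hN
  have hN0 : (0:ℝ) < N := by exact_mod_cast hN1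
  have hs0 : 0 < Real.sqrt N := Real.sqrt_pos.mpr hN0
  have hε0 : 0 < (Real.sqrt (N:ℝ))⁻¹ := by positivity
  have hs1 : 1 ≤ Real.sqrt N := by
    rw [show (1:ℝ) = Real.sqrt 1 by simp]
    exact Real.sqrt_le_sqrt (by exact_mod_cast hN1)
  have hε1 : (Real.sqrt (N:ℝ))⁻¹ ≤ 1 := inv_le_one_of_one_le₀ hs1
  have key := riemann_est (fG d k α) (HG d k α) fG_continuous fG_nonneg HG_continuous
    (HG_integrable hα) (fun x u h => fG_le_HG hα x u h) hε0 hε1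
    (fun j => -(Real.sqrt N * xstar j))
    (δ := ((n : ℝ) + 1)⁻¹)
    (fun u v h => by
      rcases eq_or_lt_of_le h with h' | h'
      · exact le_of_lt (by simpa [Real.dist_eq] using hη (show dist u v < η by rw [h']; exact hNη))
      · exact le_of_lt (by simpa [Real.dist_eq] using hη (h'.trans hNη)))
  rw [Real.dist_eq]
  rw [sum_rewrite k α xstar hN1]
  exact lt_of_le_of_lt key hn
end gauss
end

section
/- (Lumping theorem) Let M̂ be a Markov generator on a finite set 𝔖, R̂ = diag(R̂_σ), and φ : 𝔖 → S surjective with fibres Φ_m = φ^{-1}(m). Suppose there exist matrices M on S and R = diag(R_i) with R̂_σ = R_{φ(σ)} for all σ, and ∑_{τ∈Φ_m} M̂_{στ} = M_{φ(σ),m} for all σ ∈ 𝔖 and m ∈ S. Then: (i) M is a Markov generator on S; (ii) if ρ solves ρ̇ = ρ(M̂+R̂), then y_m := ∑_{σ∈Φ_m} ρ_σ solves ẏ = y(M+R); (iii) if π̂ is a stationary distribution of M̂ then π_m = ∑_{σ∈Φ_m} π̂_σ is stationary for M; (iv) if M̂ is reversible w.r.t. π̂ then M is reversible w.r.t. π;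 (v) if h̃ is a principal left eigenvector of M̂+R̂ with eigenvalue λ, then h_m = ∑_{σ∈Φ_m} h̃_σ is a left eigenvector of M+R with eigenvalue λ. -/
open Finset

theorem stmt19 {𝔖 S : Type*} [Fintype 𝔖] [Fintype S] [DecidableEq 𝔖] [DecidableEq S]
    (Mhat : Matrix 𝔖 𝔖 ℝ) (Rhat : 𝔖 → ℝ)
    (hMhatoff : ∀ σ τ, σ ≠ τ → 0 ≤ Mhat σ τ)
    (hMhatrow : ∀ σ, ∑ τ, Mhat σ τ = 0)
    (φ : 𝔖 → S) (hφ : Function.Surjective φ)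
    (M : Matrix S S ℝ) (R : S → ℝ)
    (hR : ∀ σ, Rhat σ = R (φ σ))
    (hM : ∀ σ, ∀ m, ∑ τ ∈ Finset.univ.filter (fun τ => φ τ = m), Mhat σ τ = M (φ σ) m) :
    -- (i) M is a Markov generator on S
    ((∀ m n, m ≠ n → 0 ≤ M m n) ∧ (∀ m, ∑ n, M m n = 0)) ∧
    -- (ii) the lumped abundances solve the lumped linear ODE
    (∀ ρ : ℝ → 𝔖 → ℝ,
      (∀ σ t, HasDerivAt (fun s => ρ s σ)
        (∑ τ, ρ t τ * ((Mhat + Matrix.diagonal Rhat) τ σ)) t) →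
      ∀ m t, HasDerivAt (fun s => ∑ σ ∈ Finset.univ.filter (fun σ => φ σ = m), ρ s σ)
        (∑ n, (∑ σ ∈ Finset.univ.filter (fun σ => φ σ = n), ρ t σ) *
          ((M + Matrix.diagonal R) n m)) t) ∧
    -- (iii) a stationary distribution of Mhat lumps to one of M
    (∀ πhat : 𝔖 → ℝ, (∀ τ, ∑ σ, πhat σ * Mhat σ τ = 0) →
      ∀ n, ∑ m, (∑ σ ∈ Finset.univ.filter (fun σ => φ σ = m), πhat σ) * M m n = 0) ∧
    -- (iv) reversibility is inherited
    (∀ πhat : 𝔖 → ℝ, (∀ σ τ, πhat σ * Mhat σ τ = πhat τ * Mhat τ σ) →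
      ∀ m n, (∑ σ ∈ Finset.univ.filter (fun σ => φ σ = m), πhat σ) * M m n =
        (∑ σ ∈ Finset.univ.filter (fun σ => φ σ = n), πhat σ) * M n m) ∧
    -- (v) a principal left eigenvector of Mhat + Rhat lumps to a left
    -- eigenvector of M + R with the same eigenvalue
    (∀ (htilde : 𝔖 → ℝ) (lam : ℝ),
      (∀ τ, ∑ σ, htilde σ * (Mhat + Matrix.diagonal Rhat) σ τ = lam * htilde τ) →
      ∀ m, ∑ n, (∑ σ ∈ Finset.univ.filter (fun σ => φ σ = n), htilde σ) *
          ((M + Matrix.diagonal R) n m) =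
        lam * ∑ σ ∈ Finset.univ.filter (fun σ => φ σ = m), htilde σ) := by
  -- fiberwise sum lemma
  have fib : ∀ (f : 𝔖 → ℝ), ∑ n, ∑ τ ∈ Finset.univ.filter (fun τ => φ τ = n), f τ
      = ∑ τ, f τ := by
    intro f
    exact Finset.sum_fiberwise Finset.univ φ f
  -- lumped rates for Mhat + diag Rhat
  have hAM : ∀ σ m, ∑ τ ∈ Finset.univ.filter (fun τ => φ τ = m),
      (Mhat + Matrix.diagonal Rhat) σ τ = (M + Matrix.diagonal R) (φ σ) m := by
    intro σ m
    have h1 : ∑ τ ∈ Finset.univ.filter (fun τ => φ τ = m), Matrix.diagonal Rhat σ τ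
        = Matrix.diagonal R (φ σ) m := by
      simp only [Matrix.diagonal_apply]
      rw [Finset.sum_ite_eq (Finset.univ.filter (fun τ => φ τ = m)) σ (fun _ => Rhat σ)]
      simp only [Finset.mem_filter, Finset.mem_univ, true_and]
      by_cases h : φ σ = m
      · simp [h, hR σ]
      · simp [h]
    simp only [Matrix.add_apply, Finset.sum_add_distrib, hM σ m, h1]
  refine ⟨⟨?_, ?_⟩, ?_, ?_, ?_, ?_⟩
  · -- off-diagonal nonneg
    intro m n hmn
    obtain ⟨σ, rfl⟩ := hφ m
    rw [← hM σ n]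
    apply Finset.sum_nonneg
    intro τ hτ
    apply hMhatoff
    rintro rfl
    exact hmn (Finset.mem_filter.mp hτ).2
  · -- row sums
    intro m
    obtain ⟨σ, rfl⟩ := hφ m
    calc ∑ n, M (φ σ) n = ∑ n, ∑ τ ∈ Finset.univ.filter (fun τ => φ τ = n), Mhat σ τ := by
          simp [hM σ]
      _ = ∑ τ, Mhat σ τ := fib _
      _ = 0 := hMhatrow σ
  · -- (ii)
    intro ρ hρ m t
    have key : (∑ σ ∈ Finset.univ.filter (fun σ => φ σ = m),
            ∑ τ, ρ t τ * ((Mhat + Matrix.diagonal Rhat) τ σ))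
        = ∑ n, (∑ σ ∈ Finset.univ.filter (fun σ => φ σ = n), ρ t σ) *
          ((M + Matrix.diagonal R) n m) := by
      rw [Finset.sum_comm]
      calc ∑ τ, ∑ σ ∈ Finset.univ.filter (fun σ => φ σ = m),
              ρ t τ * ((Mhat + Matrix.diagonal Rhat) τ σ)
          = ∑ τ, ρ t τ * ((M + Matrix.diagonal R) (φ τ) m) := by
            refine Finset.sum_congr rfl fun τ _ => ?_
            rw [← Finset.mul_sum, hAM τ m]
        _ = ∑ n, ∑ τ ∈ Finset.univ.filter (fun τ => φ τ = n),
              ρ t τ * ((M + Matrix.diagonal R) (φ τ) m) := (fib _).symm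
        _ = ∑ n, (∑ σ ∈ Finset.univ.filter (fun σ => φ σ = n), ρ t σ) *
              ((M + Matrix.diagonal R) n m) := by
            refine Finset.sum_congr rfl fun n _ => ?_
            rw [Finset.sum_mul]
            refine Finset.sum_congr rfl fun τ hτ => ?_
            rw [(Finset.mem_filter.mp hτ).2]
    rw [← key]
    exact HasDerivAt.fun_sum fun σ _ => hρ σ t
  · -- (iii)
    intro πhat hπ n
    calc ∑ m, (∑ σ ∈ Finset.univ.filter (fun σ => φ σ = m), πhat σ) * M m n
        = ∑ m, ∑ σ ∈ Finset.univ.filter (fun σ => φ σ = m), πhat σ * M (φ σ) n := by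
          refine Finset.sum_congr rfl fun m _ => ?_
          rw [Finset.sum_mul]
          exact Finset.sum_congr rfl fun σ hσ => by rw [(Finset.mem_filter.mp hσ).2]
      _ = ∑ σ, πhat σ * M (φ σ) n := fib _
      _ = ∑ σ, ∑ τ ∈ Finset.univ.filter (fun τ => φ τ = n), πhat σ * Mhat σ τ := by
          refine Finset.sum_congr rfl fun σ _ => ?_
          rw [← Finset.mul_sum, hM σ n]
      _ = ∑ τ ∈ Finset.univ.filter (fun τ => φ τ = n), ∑ σ, πhat σ * Mhat σ τ :=
          Finset.sum_comm
      _ = 0 := by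
          refine Finset.sum_eq_zero fun τ _ => hπ τ
  · -- (iv)
    intro πhat hrev m n
    have expand : ∀ a b : S, (∑ σ ∈ Finset.univ.filter (fun σ => φ σ = a), πhat σ) * M a b
        = ∑ σ ∈ Finset.univ.filter (fun σ => φ σ = a),
            ∑ τ ∈ Finset.univ.filter (fun τ => φ τ = b), πhat σ * Mhat σ τ := by
      intro a b
      rw [Finset.sum_mul]
      refine Finset.sum_congr rfl fun σ hσ => ?_
      rw [← Finset.mul_sum, hM σ b, (Finset.mem_filter.mp hσ).2]
    rw [expand m n, expand n m, Finset.sum_comm]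
    exact Finset.sum_congr rfl fun τ _ => Finset.sum_congr rfl fun σ _ => hrev σ τ
  · -- (v)
    intro htilde lam hev m
    calc ∑ n, (∑ σ ∈ Finset.univ.filter (fun σ => φ σ = n), htilde σ) *
          ((M + Matrix.diagonal R) n m)
        = ∑ n, ∑ σ ∈ Finset.univ.filter (fun σ => φ σ = n),
            htilde σ * ((M + Matrix.diagonal R) (φ σ) m) := by
          refine Finset.sum_congr rfl fun n _ => ?_
          rw [Finset.sum_mul]
          exact Finset.sum_congr rfl fun σ hσ => by rw [(Finset.mem_filter.mp hσ).2]
      _ = ∑ σ, htilde σ * ((M + Matrix.diagonal R) (φ σ) m) := fib _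
      _ = ∑ σ, ∑ τ ∈ Finset.univ.filter (fun τ => φ τ = m),
            htilde σ * ((Mhat + Matrix.diagonal Rhat) σ τ) := by
          refine Finset.sum_congr rfl fun σ _ => ?_
          rw [← Finset.mul_sum, hAM σ m]
      _ = ∑ τ ∈ Finset.univ.filter (fun τ => φ τ = m),
            ∑ σ, htilde σ * ((Mhat + Matrix.diagonal Rhat) σ τ) := Finset.sum_comm
      _ = ∑ τ ∈ Finset.univ.filter (fun τ => φ τ = m), lam * htilde τ :=
          Finset.sum_congr rfl fun τ _ => hev τ
      _ = lam * ∑ σ ∈ Finset.univ.filter (fun σ => φ σ = m), htilde σ :=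
          (Finset.mul_sum _ _ _).symm
end
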